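/- arXiv:2406.11648 — 6 statements merged into one kernel-verified Lean document; each statement's English description precedes it below -/
import Mathlib

section
/- For n ≥ 3, let M_n be the n×n real matrix with M_{1,1} = 1, M_{2,2} = 1, M_{1,3} = 1, M_{3,1} = -1, M_{2,3} = 1, M_{3,2} = -1, and for 3 ≤ i ≤ n-1: M_{i,i} = 1, M_{i,i+1} = 1, M_{i+1,i} = -1, M_{n,n} = 1, with all other entries 0. Then det(M_n) = ℓ_{n-1}, the (n-1)-th Lucas number. -/
/-!
Expanding along the last row, the part of the caterpillar beyond the branch point behaves like a
tridiagonal continuant whose off-diagonal products are `1 * (-1) = -1`, so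
`det M_(n+2) = det M_(n+1) + det M_n` once `n + 2 ≥ 4`. With `det M_2 = 1` and `det M_3 = 3` these
are the Lucas numbers.
-/

open Matrix

namespace Matrix

variable {R : Type*} [CommRing R] {n : ℕ}

theorem det_succ_of_column_last_eq_zero (B : Matrix (Fin (n + 1)) (Fin (n + 1)) R)
    (h : ∀ i, i ≠ Fin.last n → B i (Fin.last n) = 0) :
    B.det = B (Fin.last n) (Fin.last n) * (B.submatrix Fin.castSucc Fin.castSucc).det := by
  rw [det_succ_column B (Fin.last n),
    Finset.sum_eq_single (Fin.last n) (fun i _ hi => by rw [h i hi, mul_zero, zero_mul])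
      (by simp), Fin.succAbove_last, ← two_mul, pow_mul, neg_one_sq, one_pow, one_mul]

theorem det_succ_succ_of_tridiagonal_last (A : Matrix (Fin (n + 2)) (Fin (n + 2)) R)
    (hrow : ∀ j : Fin (n + 2), (j : ℕ) < n → A (Fin.last _) j = 0)
    (hcol : ∀ i : Fin (n + 2), (i : ℕ) < n → A i (Fin.last _) = 0) :
    A.det = A (Fin.last _) (Fin.last _) * (A.submatrix Fin.castSucc Fin.castSucc).det -
      A (Fin.last _) (Fin.last _).castSucc * A (Fin.last _).castSucc (Fin.last _) *
        ((A.submatrix Fin.castSucc Fin.castSucc).submatrix Fin.castSucc Fin.castSucc).det := by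
  have hminor : (A.submatrix Fin.castSucc (Fin.last n).castSucc.succAbove).det =
      A (Fin.last n).castSucc (Fin.last _) *
        ((A.submatrix Fin.castSucc Fin.castSucc).submatrix Fin.castSucc Fin.castSucc).det := by
    rw [det_succ_of_column_last_eq_zero]
    · simp only [submatrix_apply, Fin.succAbove_castSucc_self, Fin.succ_last, submatrix_submatrix]
      rw [show (Fin.last n).castSucc.succAbove ∘ Fin.castSucc = Fin.castSucc ∘ Fin.castSucc from
        funext fun j => Fin.succAbove_castSucc_of_lt _ _ (Fin.castSucc_lt_last j)]
    · intro i hi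
      simp only [submatrix_apply, Fin.succAbove_castSucc_self, Fin.succ_last]
      exact hcol _ (Fin.val_lt_last hi)
  rw [det_succ_row A (Fin.last _), Fintype.sum_eq_add (Fin.last _) (Fin.last n).castSucc
    (Fin.castSucc_lt_last _).ne' ?_, Fin.succAbove_last, hminor]
  · simp only [Fin.val_last, Fin.val_castSucc, Even.neg_one_pow ⟨n + 1, rfl⟩,
      Odd.neg_one_pow (⟨n, by ring⟩ : Odd (n + 1 + n))]
    ring
  · rintro j ⟨hj, hj'⟩
    simp only [ne_eq, Fin.ext_iff, Fin.val_last, Fin.val_castSucc] at hj hj'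
    rw [hrow j (by omega), mul_zero, zero_mul]

end Matrix

/-- Indices start at `0`, so the branch vertex `3` of the paper is index `2` here. -/
def caterpillarMatrix (R : Type*) [Ring R] (n : ℕ) : Matrix (Fin n) (Fin n) R :=
  Matrix.of fun i j =>
    if i = j then 1
    else if (i.val = 0 ∧ j.val = 2) ∨ (i.val = 1 ∧ j.val = 2) ∨
            (2 ≤ i.val ∧ j.val = i.val + 1) then 1
    else if (j.val = 0 ∧ i.val = 2) ∨ (j.val = 1 ∧ i.val = 2) ∨
            (2 ≤ j.val ∧ i.val = j.val + 1) then -1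
    else 0

section caterpillarMatrix

variable {R : Type*} [CommRing R]

theorem caterpillarMatrix_submatrix_castSucc (n : ℕ) :
    (caterpillarMatrix R (n + 1)).submatrix Fin.castSucc Fin.castSucc = caterpillarMatrix R n := by
  ext i j
  simp only [caterpillarMatrix, submatrix_apply, of_apply, Fin.val_castSucc, Fin.castSucc_inj]

theorem det_caterpillarMatrix_two : (caterpillarMatrix R 2).det = 1 := by
  simp [det_fin_two, caterpillarMatrix]

theorem det_caterpillarMatrix_three : (caterpillarMatrix R 3).det = 3 := by
  simp [det_fin_three, caterpillarMatrix]
  norm_num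

theorem det_caterpillarMatrix_add_four (n : ℕ) :
    (caterpillarMatrix R (n + 4)).det =
      (caterpillarMatrix R (n + 3)).det + (caterpillarMatrix R (n + 2)).det := by
  have hdiag : caterpillarMatrix R (n + 4) (Fin.last _) (Fin.last _) = 1 := if_pos rfl
  have hbelow : caterpillarMatrix R (n + 4) (Fin.last _) (Fin.last (n + 2)).castSucc = -1 := by
    simp only [caterpillarMatrix, of_apply]
    rw [if_neg, if_neg, if_pos] <;>
      simp only [Fin.ext_iff, Fin.val_last, Fin.val_castSucc, and_true] <;> omega
  have habove : caterpillarMatrix R (n + 4) (Fin.last (n + 2)).castSucc (Fin.last _) = 1 := by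
    simp only [caterpillarMatrix, of_apply]
    rw [if_neg, if_pos] <;>
      simp only [Fin.ext_iff, Fin.val_last, Fin.val_castSucc, and_true] <;> omega
  rw [det_succ_succ_of_tridiagonal_last (n := n + 2), caterpillarMatrix_submatrix_castSucc,
    caterpillarMatrix_submatrix_castSucc, hdiag, hbelow, habove]
  · ring
  · intro j hj
    simp only [caterpillarMatrix, of_apply]
    rw [if_neg, if_neg, if_neg] <;> simp only [Fin.ext_iff, Fin.val_last] <;> omega
  · intro i hi
    simp only [caterpillarMatrix, of_apply]
    rw [if_neg, if_neg, if_neg] <;> simp only [Fin.ext_iff, Fin.val_last] <;> omega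

end caterpillarMatrix

theorem det_caterpillar_eq_lucas (n : ℕ) (hn : 3 ≤ n)
    (l : ℕ → ℝ) (hl1 : l 1 = 1) (hl2 : l 2 = 3)
    (hl : ∀ k, 3 ≤ k → l k = l (k - 1) + l (k - 2)) :
    (Matrix.of (fun i j : Fin n =>
      if i = j then (1 : ℝ)
      else if (i.val = 0 ∧ j.val = 2) ∨ (i.val = 1 ∧ j.val = 2) ∨
              (2 ≤ i.val ∧ j.val = i.val + 1) then 1
      else if (j.val = 0 ∧ i.val = 2) ∨ (j.val = 1 ∧ i.val = 2) ∨
              (2 ≤ j.val ∧ i.val = j.val + 1) then -1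
      else 0)).det = l (n - 1) := by
  have hdet : ∀ k, (caterpillarMatrix ℝ (k + 2)).det = l (k + 1) := by
    intro k
    induction k using Nat.twoStepInduction with
    | zero => rw [det_caterpillarMatrix_two, hl1]
    | one => rw [det_caterpillarMatrix_three, hl2]
    | more k ih₀ ih₁ => rw [det_caterpillarMatrix_add_four, ih₁, ih₀, hl (k + 3) (by omega)]; rfl
  obtain ⟨k, rfl⟩ : ∃ k, n = k + 2 := ⟨n - 2, by omega⟩
  exact hdet k
end

section
/- For n ≥ 3, let M_n be the n×n real matrix with M_{1,1} = 2, M_{i,i} = 1 for 2 ≤ i ≤ n, M_{i,i+1} = 1 and M_{i+1,i} = -1 for 1 ≤ i ≤ n-1, M_{1,n} = -1, M_{n,1} = 1, all other entries 0. Then det(M_n) = 2 f_{n+1} - 1 + (-1)^{n+1}, where f_k is the k-th Fibonacci number. -/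
/-!
Off row and column `0`, `M_n` is the Toeplitz matrix of `wheelSymbol` (`1` on and just above the
diagonal, `-1` just below), whose `k × k` determinant obeys the continuant recurrence
`D (k + 2) = D (k + 1) + D k` and hence equals `f (k + 1)`. Expanding `det M_n` along row `0`
(entries `2, 1, -1`), and the two outer minors along their first column (entries `-1, 1`), leaves
only Toeplitz minors of this symbol shifted by `0` or `±1`; the shifted ones are triangular, with
determinant `1` or `(-1) ^ k`.
-/

namespace Matrix

variable {R : Type*}

def toeplitz (k : ℕ) (c : ℤ → R) : Matrix (Fin k) (Fin k) R :=
  of fun i j => c ((j : ℤ) - i)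

@[simp]
theorem toeplitz_apply (k : ℕ) (c : ℤ → R) (i j : Fin k) :
    toeplitz k c i j = c ((j : ℤ) - i) :=
  rfl

theorem submatrix_eq_toeplitz {n k : ℕ} (A : Matrix (Fin n) (Fin n) R) (c : ℤ → R)
    (p q : Fin k → Fin n) (d : ℤ) (hA : ∀ i j, A (p i) (q j) = c ((q j : ℤ) - p i))
    (hpq : ∀ i j, (q j : ℤ) - p i = j - i + d) :
    A.submatrix p q = toeplitz k (fun e => c (e + d)) := by
  ext i j
  rw [submatrix_apply, hA, hpq, toeplitz_apply]

variable [CommRing R]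

theorem det_toeplitz_of_neg {k : ℕ} {c : ℤ → R} (hc : ∀ e < 0, c e = 0) :
    (toeplitz k c).det = c 0 ^ k := by
  have hupper : (toeplitz k c).IsUpperTriangular := fun i j (hij : j < i) => hc _ (by simp; omega)
  simp [det_of_isUpperTriangular hupper]

theorem det_toeplitz_of_pos {k : ℕ} {c : ℤ → R} (hc : ∀ e > 0, c e = 0) :
    (toeplitz k c).det = c 0 ^ k := by
  have hlower : (toeplitz k c).IsLowerTriangular := fun i j (hij : i < j) => hc _ (by simp; omega)
  simp [det_of_isLowerTriangular _ hlower]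

theorem det_toeplitz_add_two {k : ℕ} {c : ℤ → R} (hc : ∀ e, 1 < |e| → c e = 0) :
    (toeplitz (k + 2) c).det =
      c 0 * (toeplitz (k + 1) c).det - c 1 * c (-1) * (toeplitz k c).det := by
  have hshift : ∀ {l} (p q : Fin l → Fin (k + 2)), (∀ i j, (q j : ℤ) - p i = j - i) →
      (toeplitz (k + 2) c).submatrix p q = toeplitz l c := fun p q h => by
    simpa using submatrix_eq_toeplitz _ c p q 0 (fun _ _ => rfl) (by simpa using h)
  have hminor : ((toeplitz (k + 2) c).submatrix Fin.succ (Fin.succAbove 1)).det =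
      c (-1) * (toeplitz k c).det := by
    rw [det_succ_column_zero, Fintype.sum_eq_single 0 fun i hi => ?_]
    · simp [submatrix_submatrix, Function.comp_def, hshift]
    · have hi' : (i : ℕ) ≠ 0 := Fin.val_ne_zero_iff.mpr hi
      rw [submatrix_apply, Fin.one_succAbove_zero, toeplitz_apply,
        hc _ (by rw [lt_abs]; right; simp only [Fin.val_succ, Fin.val_zero]; push_cast; omega),
        mul_zero, zero_mul]
  rw [det_succ_row_zero, Fintype.sum_eq_add 0 1 Fin.zero_ne_one fun j hj => ?_]
  · rw [Fin.succAbove_zero, hshift _ _ (by simp), hminor]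
    simp only [toeplitz_apply, Fin.val_zero, Fin.val_one, Nat.cast_zero, Nat.cast_one, sub_zero,
      sub_self, pow_zero, pow_one]
    ring
  · have h0 : (j : ℕ) ≠ 0 := Fin.val_ne_zero_iff.mpr hj.1
    have h1 : (j : ℕ) ≠ 1 := fun h => hj.2 (Fin.ext h)
    rw [toeplitz_apply, hc _ (by rw [lt_abs]; simp; omega), mul_zero, zero_mul]

end Matrix

open Matrix

theorem eq_fib_of_recurrence {R : Type*} [AddMonoidWithOne R] {f : ℕ → R} (h₁ : f 1 = 1)
    (h₂ : f 2 = 1) (h : ∀ k, 3 ≤ k → f k = f (k - 1) + f (k - 2)) (k : ℕ) :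
    f (k + 1) = Nat.fib (k + 1) := by
  induction k using Nat.twoStepInduction with
  | zero => simpa using h₁
  | one => simpa using h₂
  | more k ih₀ ih₁ =>
    have e₁ : k + 2 + 1 - 1 = k + 1 + 1 := rfl
    have e₂ : k + 2 + 1 - 2 = k + 1 := rfl
    rw [h _ (by omega), e₁, e₂, ih₁, ih₀, ← Nat.cast_add, Nat.fib_add_two (n := k + 1)]
    exact congr_arg _ (add_comm _ _)

def wheelSymbol (e : ℤ) : ℝ :=
  if e = 0 ∨ e = 1 then 1 else if e = -1 then -1 else 0

@[simp] theorem wheelSymbol_zero : wheelSymbol 0 = 1 := rfl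

@[simp] theorem wheelSymbol_one : wheelSymbol 1 = 1 := by simp [wheelSymbol]

@[simp] theorem wheelSymbol_neg_one : wheelSymbol (-1) = -1 := by simp [wheelSymbol]

theorem wheelSymbol_eq_zero {e : ℤ} (he : 1 < |e|) : wheelSymbol e = 0 := by
  rw [lt_abs] at he
  rw [wheelSymbol, if_neg (by omega), if_neg (by omega)]

theorem det_toeplitz_wheelSymbol (k : ℕ) : (toeplitz k wheelSymbol).det = Nat.fib (k + 1) := by
  induction k using Nat.twoStepInduction with
  | zero => simp
  | one => simp
  | more k ih₀ ih₁ =>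
    rw [det_toeplitz_add_two fun _ => wheelSymbol_eq_zero, ih₀, ih₁,
      Nat.fib_add_two (n := k + 1), wheelSymbol_zero, wheelSymbol_one, wheelSymbol_neg_one]
    push_cast
    ring

theorem det_toeplitz_wheelSymbol_add_one (k : ℕ) :
    (toeplitz k fun e => wheelSymbol (e + 1)).det = 1 := by
  rw [det_toeplitz_of_pos fun e he => wheelSymbol_eq_zero (by rw [lt_abs]; omega)]
  simp

theorem det_toeplitz_wheelSymbol_sub_one (k : ℕ) :
    (toeplitz k fun e => wheelSymbol (e + -1)).det = (-1) ^ k := by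
  rw [det_toeplitz_of_neg fun e he => wheelSymbol_eq_zero (by rw [lt_abs]; omega)]
  simp

def twistedWheel (n : ℕ) : Matrix (Fin n) (Fin n) ℝ :=
  Matrix.of fun i j : Fin n =>
    if i = j then (if i.val = 0 then (2 : ℝ) else 1)
    else if j.val = i.val + 1 then 1
    else if i.val = j.val + 1 then -1
    else if i.val = 0 ∧ j.val = n - 1 then -1
    else if i.val = n - 1 ∧ j.val = 0 then 1
    else 0

theorem twistedWheel_apply_of_ne_zero {n : ℕ} {i j : Fin n} (hi : (i : ℕ) ≠ 0)
    (hj : (j : ℕ) ≠ 0) : twistedWheel n i j = wheelSymbol (j - i) := by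
  simp only [twistedWheel, of_apply, wheelSymbol, Fin.ext_iff]
  split_ifs <;> grind

theorem twistedWheel_zero_zero (m : ℕ) : twistedWheel (m + 1) 0 0 = 2 := by
  simp [twistedWheel]

theorem twistedWheel_zero_succ {m : ℕ} (j : Fin (m + 2)) :
    twistedWheel (m + 3) 0 j.succ = if j = 0 then 1 else if j = Fin.last _ then -1 else 0 := by
  simp only [twistedWheel, of_apply, Fin.ext_iff, Fin.val_succ, Fin.val_zero, Fin.val_last]
  split_ifs <;> grind

theorem twistedWheel_succ_zero {m : ℕ} (i : Fin (m + 2)) :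
    twistedWheel (m + 3) i.succ 0 = if i = 0 then -1 else if i = Fin.last _ then 1 else 0 := by
  simp only [twistedWheel, of_apply, Fin.ext_iff, Fin.val_succ, Fin.val_zero, Fin.val_last]
  split_ifs <;> grind

theorem twistedWheel_submatrix_eq_toeplitz {n k : ℕ} (p q : Fin k → Fin n) (d : ℤ)
    (hp : ∀ i, (p i : ℕ) ≠ 0) (hq : ∀ j, (q j : ℕ) ≠ 0)
    (hpq : ∀ i j, (q j : ℤ) - p i = j - i + d) :
    (twistedWheel n).submatrix p q = toeplitz k fun e => wheelSymbol (e + d) :=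
  submatrix_eq_toeplitz _ _ p q d (fun i j => twistedWheel_apply_of_ne_zero (hp i) (hq j)) hpq

theorem det_twistedWheel_submatrix_succ {m : ℕ} (g : Fin (m + 2) → Fin (m + 3)) (hg : g 0 = 0) :
    ((twistedWheel (m + 3)).submatrix Fin.succ g).det =
      -((twistedWheel (m + 3)).submatrix (Fin.succ ∘ Fin.succ) (g ∘ Fin.succ)).det +
        (-1) ^ (m + 1) *
          ((twistedWheel (m + 3)).submatrix (Fin.succ ∘ Fin.castSucc) (g ∘ Fin.succ)).det := by
  rw [det_succ_column_zero, Fintype.sum_eq_add 0 (Fin.last _) (Fin.last_pos.ne) fun i hi => ?_]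
  · simp only [submatrix_apply, hg, twistedWheel_succ_zero, if_pos, if_neg Fin.last_pos.ne']
    simp [submatrix_submatrix]
  · simp only [submatrix_apply, hg, twistedWheel_succ_zero, if_neg hi.1, if_neg hi.2]
    simp

theorem det_twistedWheel_submatrix_succ_succAbove_one (m : ℕ) :
    ((twistedWheel (m + 3)).submatrix Fin.succ (Fin.succAbove 1)).det =
      -Nat.fib (m + 2) + (-1) ^ (m + 1) := by
  rw [det_twistedWheel_submatrix_succ _ Fin.one_succAbove_zero,
    twistedWheel_submatrix_eq_toeplitz _ _ 0 (by simp) (by simp) (by simp),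
    twistedWheel_submatrix_eq_toeplitz _ _ 1 (by simp) (by simp) (by simp; intros; ring)]
  simp [det_toeplitz_wheelSymbol, det_toeplitz_wheelSymbol_add_one]

theorem det_twistedWheel_submatrix_succ_castSucc (m : ℕ) :
    ((twistedWheel (m + 3)).submatrix Fin.succ Fin.castSucc).det =
      -(-1) ^ (m + 1) + (-1) ^ (m + 1) * Nat.fib (m + 2) := by
  rw [det_twistedWheel_submatrix_succ _ Fin.castSucc_zero,
    twistedWheel_submatrix_eq_toeplitz _ _ (-1) (by simp) (by simp) (by simp; intros; ring),
    twistedWheel_submatrix_eq_toeplitz _ _ 0 (by simp) (by simp) (by simp)]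
  simp [det_toeplitz_wheelSymbol, det_toeplitz_wheelSymbol_sub_one]

theorem det_twistedWheel_submatrix_succ_succ (m : ℕ) :
    ((twistedWheel (m + 3)).submatrix Fin.succ Fin.succ).det = Nat.fib (m + 3) := by
  rw [twistedWheel_submatrix_eq_toeplitz _ _ 0 (by simp) (by simp) (by simp)]
  simpa using det_toeplitz_wheelSymbol (m + 2)

theorem det_twistedWheel (m : ℕ) :
    (twistedWheel (m + 3)).det = 2 * Nat.fib (m + 4) - 1 + (-1) ^ (m + 4) := by
  rw [det_succ_row_zero, Fin.sum_univ_succ,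
    Fintype.sum_eq_add 0 (Fin.last _) (Fin.last_pos.ne) fun j hj => ?_]
  · simp only [twistedWheel_zero_zero, twistedWheel_zero_succ, if_pos, if_neg Fin.last_pos.ne']
    simp only [Fin.succ_zero_eq_one, Fin.succ_last, Fin.succAbove_last, Fin.succAbove_zero]
    rw [det_twistedWheel_submatrix_succ_succ, det_twistedWheel_submatrix_succ_succAbove_one,
      det_twistedWheel_submatrix_succ_castSucc, Nat.fib_add_two (n := m + 2)]
    have hsq : ((-1 : ℝ) ^ (m + 1)) ^ 2 = 1 := by
      rw [← pow_mul, Even.neg_one_pow ⟨m + 1, by ring⟩]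
    simp only [Fin.val_zero, Fin.val_one, Fin.val_last, Nat.succ_eq_add_one]
    push_cast
    linear_combination (Nat.fib (m + 2) - 1 : ℝ) * hsq
  · simp only [twistedWheel_zero_succ, if_neg hj.1, if_neg hj.2]
    simp

theorem det_wheel_twisted (n : ℕ) (hn : 3 ≤ n)
    (f : ℕ → ℝ) (hf1 : f 1 = 1) (hf2 : f 2 = 1)
    (hf : ∀ k, 3 ≤ k → f k = f (k - 1) + f (k - 2)) :
    (Matrix.of (fun i j : Fin n =>
      if i = j then (if i.val = 0 then (2 : ℝ) else 1)
      else if j.val = i.val + 1 then 1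
      else if i.val = j.val + 1 then -1
      else if i.val = 0 ∧ j.val = n - 1 then -1
      else if i.val = n - 1 ∧ j.val = 0 then 1
      else 0)).det = 2 * f (n + 1) - 1 + (-1) ^ (n + 1) := by
  obtain ⟨m, rfl⟩ : ∃ m, n = m + 3 := ⟨n - 3, by omega⟩
  rw [eq_fib_of_recurrence hf1 hf2 hf (m + 3)]
  exact det_twistedWheel m
end

section
/- For n ≥ 2, let M_n be the n×n real matrix with M_{1,1} = 2, M_{2,2} = 1, M_{1,3} = 1, M_{3,1} = -1, M_{2,3} = 1, M_{3,2} = -1, M_{i,i} = 1 and M_{i,i+1} = 1, M_{i+1,i} = -1 for 3 ≤ i ≤ n-1, M_{n,n} = 1, all other entries 0. Then det(M_n) = f_n + ℓ_{n-1}, where f_n is the n-th Fibonacci number and ℓ_{n-1} the (n-1)-th Lucas number. -/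
/-!
Expanding along the last row and then the last column: for `n ≥ 4` the last row and column of
`M_n` carry only the path entries `M_{n,n} = 1`, `M_{n,n-1} = -1`, `M_{n-1,n} = 1`, so
`det M_n = det M_{n-1} + det M_{n-2}`. The right-hand side `f_n + ℓ_{n-1}` obeys the same
recurrence, and both sides agree at `n = 2, 3` (values `2` and `5`).
-/

open Matrix Fin

namespace Matrix

variable {R : Type*} [CommRing R]

theorem det_succ_of_col_last_eq_zero {m : ℕ} (A : Matrix (Fin (m + 1)) (Fin (m + 1)) R)
    (hcol : ∀ i : Fin m, A i.castSucc (last m) = 0) :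
    A.det = A (last m) (last m) * (A.submatrix castSucc castSucc).det := by
  rw [det_succ_column A (last m), sum_univ_castSucc]
  simp [hcol]

theorem det_succ_succ_of_row_col_last_eq_zero {m : ℕ} (A : Matrix (Fin (m + 2)) (Fin (m + 2)) R)
    (hrow : ∀ j : Fin m, A (last _) j.castSucc.castSucc = 0)
    (hcol : ∀ i : Fin m, A i.castSucc.castSucc (last _) = 0) :
    A.det = A (last _) (last _) * (A.submatrix castSucc castSucc).det -
      A (last _) (last m).castSucc * A (last m).castSucc (last _) *
        (A.submatrix (castSucc ∘ castSucc) (castSucc ∘ castSucc)).det := by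
  have hminor : (A.submatrix castSucc (last m).castSucc.succAbove).det =
      A (last m).castSucc (last _) *
        (A.submatrix (castSucc ∘ castSucc) (castSucc ∘ castSucc)).det := by
    have hcastSucc (i : Fin m) : (last m).castSucc.succAbove i.castSucc = i.castSucc.castSucc :=
      succAbove_castSucc_of_lt _ _ (castSucc_lt_last i)
    rw [det_succ_of_col_last_eq_zero _ fun i => by simpa [hcastSucc] using hcol i]
    simp [submatrix_submatrix, Function.comp_def, hcastSucc]
  rw [det_succ_row A (last _), sum_univ_castSucc, sum_univ_castSucc]
  simp [hrow, hminor]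
  ring

end Matrix

/-- The entry `M_{i+1,j+1}` of the paper; it does not depend on `n`, so `M_n` is the leading
principal block of `M_{n+1}`. -/
def twistedCaterpillarEntry (i j : ℕ) : ℝ :=
  if i = j then (if i = 0 then 2 else 1)
  else if (i = 0 ∧ j = 2) ∨ (i = 1 ∧ j = 2) ∨ (2 ≤ i ∧ j = i + 1) then 1
  else if (j = 0 ∧ i = 2) ∨ (j = 1 ∧ i = 2) ∨ (2 ≤ j ∧ i = j + 1) then -1
  else 0

def twistedCaterpillar (n : ℕ) : Matrix (Fin n) (Fin n) ℝ :=
  of fun i j => twistedCaterpillarEntry i j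

namespace twistedCaterpillar

theorem entry_eq_zero_of_add_two_le {i j : ℕ} (h : j + 2 ≤ i) (hi : i ≠ 2) :
    twistedCaterpillarEntry i j = 0 := by
  unfold twistedCaterpillarEntry
  split_ifs <;> first | rfl | omega

theorem entry_eq_zero_of_add_two_le' {i j : ℕ} (h : i + 2 ≤ j) (hj : j ≠ 2) :
    twistedCaterpillarEntry i j = 0 := by
  unfold twistedCaterpillarEntry
  split_ifs <;> first | rfl | omega

theorem submatrix_castSucc (n : ℕ) :
    (twistedCaterpillar (n + 1)).submatrix castSucc castSucc = twistedCaterpillar n :=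
  rfl

theorem det_two : (twistedCaterpillar 2).det = 2 := by
  rw [det_fin_two]
  simp [twistedCaterpillar, twistedCaterpillarEntry]

theorem det_three : (twistedCaterpillar 3).det = 5 := by
  rw [det_fin_three]
  norm_num [twistedCaterpillar, twistedCaterpillarEntry, -Fin.val_eq_zero_iff]

theorem det_add_four (k : ℕ) :
    (twistedCaterpillar (k + 4)).det =
      (twistedCaterpillar (k + 3)).det + (twistedCaterpillar (k + 2)).det := by
  rw [det_succ_succ_of_row_col_last_eq_zero _
    (fun j => entry_eq_zero_of_add_two_le
      (by simp only [val_castSucc, val_last]; omega) (by simp))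
    (fun i => entry_eq_zero_of_add_two_le'
      (by simp only [val_castSucc, val_last]; omega) (by simp))]
  simp only [← submatrix_submatrix, submatrix_castSucc]
  norm_num [twistedCaterpillar, twistedCaterpillarEntry]

end twistedCaterpillar

theorem det_caterpillar_first_twisted (n : ℕ) (hn : 2 ≤ n)
    (f l : ℕ → ℝ) (hf1 : f 1 = 1) (hf2 : f 2 = 1)
    (hf : ∀ k, 3 ≤ k → f k = f (k - 1) + f (k - 2))
    (hl1 : l 1 = 1) (hl2 : l 2 = 3)
    (hl : ∀ k, 3 ≤ k → l k = l (k - 1) + l (k - 2)) :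
    (Matrix.of (fun i j : Fin n =>
      if i = j then (if i.val = 0 then (2 : ℝ) else 1)
      else if (i.val = 0 ∧ j.val = 2) ∨ (i.val = 1 ∧ j.val = 2) ∨
              (2 ≤ i.val ∧ j.val = i.val + 1) then 1
      else if (j.val = 0 ∧ i.val = 2) ∨ (j.val = 1 ∧ i.val = 2) ∨
              (2 ≤ j.val ∧ i.val = j.val + 1) then -1
      else 0)).det = f n + l (n - 1) := by
  obtain ⟨k, rfl⟩ : ∃ k, n = k + 2 := ⟨n - 2, by omega⟩
  calc _ = (twistedCaterpillar (k + 2)).det := by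
        congr 1
        ext i j
        simp only [twistedCaterpillar, twistedCaterpillarEntry, of_apply, Fin.ext_iff]
    _ = f (k + 2) + l (k + 1) := ?_
  clear hn
  induction k using Nat.twoStepInduction with
  | zero => rw [twistedCaterpillar.det_two, hf2, hl1]; norm_num
  | one => rw [twistedCaterpillar.det_three, hf 3 le_rfl, hf1, hf2, hl2]; norm_num
  | more k ih₀ ih₁ =>
    have hf' : f (k + 4) = f (k + 3) + f (k + 2) := hf (k + 4) (by omega)
    have hl' : l (k + 3) = l (k + 2) + l (k + 1) := hl (k + 3) (by omega)
    rw [twistedCaterpillar.det_add_four, ih₀, ih₁, hf', hl']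
    ring
end

section
/- For n ≥ 2, let A be the n×n matrix with A_{1,1} = 1, A_{i,i+1} = 1, A_{i+1,i} = −1 for 1 ≤ i ≤ n−1, and all other entries 0. Then det(t·I_n − A) = f_{n+1}(t) − f_n(t), where f_k(x) are the Fibonacci polynomials with f_1(x) = 1, f_2(x) = x, f_{n+1}(x) = x f_n(x) + f_{n-1}(x). -/
/-!
Expanding along the first row shows that the determinants of tridiagonal matrices with constant
off-diagonal entries `u`, `l` satisfy the continuant recurrence
`D_{n+2} = d_0 D_{n+1} - u l D_n`. For `t I - A` we have `u l = -1`, so the principal minors with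
diagonal `t` are the Fibonacci polynomials, `D_n = f_{n+1}(t)`, and the twisted corner entry
`t - 1` gives `det (t I - A) = (t - 1) f_n(t) + f_{n-1}(t) = f_{n+1}(t) - f_n(t)`.
-/

open Polynomial

namespace Matrix

variable {R : Type*} [CommRing R]

def tridiag (d : ℕ → R) (u l : R) (n : ℕ) : Matrix (Fin n) (Fin n) R :=
  of fun i j =>
    if i = j then d i
    else if (j : ℕ) = i + 1 then u
    else if (i : ℕ) = j + 1 then l
    else 0

theorem tridiag_submatrix_succ (d : ℕ → R) (u l : R) (n : ℕ) :
    (tridiag d u l (n + 1)).submatrix Fin.succ Fin.succ = tridiag (fun k => d (k + 1)) u l n := by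
  ext i j
  simp [tridiag, Fin.succ_inj]

theorem det_tridiag_succ_succ (d : ℕ → R) (u l : R) (n : ℕ) :
    (tridiag d u l (n + 2)).det =
      d 0 * (tridiag (fun k => d (k + 1)) u l (n + 1)).det -
        u * l * (tridiag (fun k => d (k + 2)) u l n).det := by
  have hminor : ((tridiag d u l (n + 2)).submatrix Fin.succ (Fin.succ 0).succAbove).det =
      l * (tridiag (fun k => d (k + 2)) u l n).det := by
    have hsub : ((tridiag d u l (n + 2)).submatrix Fin.succ (Fin.succ 0).succAbove).submatrix
        (Fin.succAbove 0) Fin.succ = tridiag (fun k => d (k + 2)) u l n := by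
      ext i j
      simp [tridiag, Fin.ext_iff]
    rw [det_succ_column_zero, Fin.sum_univ_succ, hsub]
    simp [tridiag, Fin.ext_iff]
  rw [det_succ_row_zero, Fin.sum_univ_succ, Fin.sum_univ_succ, hminor, Fin.succAbove_zero,
    tridiag_submatrix_succ]
  simp [tridiag, Fin.ext_iff]
  ring

theorem charmatrix_tridiag (d : ℕ → R) (u l : R) (n : ℕ) :
    charmatrix (tridiag d u l n) = tridiag (fun k => X - C (d k)) (-C u) (-C l) n := by
  ext i j
  by_cases hij : i = j
  · subst hij
    simp [tridiag, charmatrix_apply_eq]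
  · rw [charmatrix_apply_ne _ _ _ hij]
    simp only [tridiag, of_apply, if_neg hij]
    split_ifs <;> simp

theorem det_tridiag_const_eq_fibonacci (x u l : R) (hul : u * l = -1) (f : ℕ → R)
    (hf1 : f 1 = 1) (hf2 : f 2 = x) (hf : ∀ k, 2 ≤ k → f (k + 1) = x * f k + f (k - 1)) :
    ∀ n, (tridiag (fun _ => x) u l n).det = f (n + 1)
  | 0 => by simp [hf1]
  | 1 => by simp [tridiag, hf2]
  | n + 2 => by
    rw [det_tridiag_succ_succ, det_tridiag_const_eq_fibonacci x u l hul f hf1 hf2 hf n,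
      det_tridiag_const_eq_fibonacci x u l hul f hf1 hf2 hf (n + 1), hul, hf (n + 2) le_add_self, Nat.add_one_sub_one]
    ring

end Matrix

theorem charpoly_path_bouquet_twisted (n : ℕ) (hn : 2 ≤ n)
    (f : ℕ → Polynomial ℝ)
    (hf1 : f 1 = 1) (hf2 : f 2 = Polynomial.X)
    (hf : ∀ k, 2 ≤ k → f (k + 1) = Polynomial.X * f k + f (k - 1)) :
    (Matrix.of (fun i j : Fin n =>
      if i = j then (if i.val = 0 then (1 : ℝ) else 0)
      else if j.val = i.val + 1 then 1
      else if i.val = j.val + 1 then -1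
      else 0) : Matrix (Fin n) (Fin n) ℝ).charpoly = f (n + 1) - f n := by
  obtain ⟨m, rfl⟩ := Nat.exists_eq_add_of_le' hn
  have hD := Matrix.det_tridiag_const_eq_fibonacci X (-C 1) (-C (-1)) (by simp) f hf1 hf2 hf
  change (Matrix.tridiag (fun k => if k = 0 then 1 else 0) 1 (-1) (m + 2)).charpoly = _
  rw [Matrix.charpoly, Matrix.charmatrix_tridiag, Matrix.det_tridiag_succ_succ]
  simp only [if_true, Nat.add_eq_zero_iff, one_ne_zero, two_ne_zero, and_false, if_false, map_zero,
    sub_zero]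
  rw [hD, hD, hf (m + 2) le_add_self]
  simp only [map_one, map_neg, Nat.add_one_sub_one]
  ring
end

section
/- For n ≥ 3, let A be the n×n matrix with A_{1,1} = 1, A_{i,i+1} = 1 and A_{i+1,i} = −1 for 1 ≤ i ≤ n−1, A_{1,n} = −1, A_{n,1} = 1, and all other entries 0. Then det(t·I_n − A) = (t−1)·f_n(t) + 2·f_{n-1}(t) + (−1)^{n+1} − 1, where f_k are the Fibonacci polynomials. -/
/-!
`t • 1 - A` is tridiagonal, with diagonal `(t - 1, t, …, t)` and off-diagonal entries `∓1`,
apart from its two corner entries `±1`. Expanding along the first row leaves three minors. The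
first is the tridiagonal continuant, whose determinant is `f_n(t)` by the Fibonacci recurrence.
Each of the other two, expanded along its first column, splits into the continuant of size
`n - 2` (determinant `f_{n-1}(t)`) and a triangular matrix with diagonal `±1`.
-/

open Matrix

@[grind =]
theorem Fin.val_succAbove {n : ℕ} (p : Fin (n + 1)) (i : Fin n) :
    (p.succAbove i : ℕ) = if (i : ℕ) < p then (i : ℕ) else (i : ℕ) + 1 := by
  rw [Fin.succAbove]
  split_ifs <;> simp_all [Fin.lt_def]

namespace WheelCharpoly

variable {R : Type*} [CommRing R]

theorem det_succ_row_zero_of_support {n : ℕ} (A : Matrix (Fin (n + 1)) (Fin (n + 1)) R)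
    (s : Finset (Fin (n + 1))) (hs : ∀ j ∉ s, A 0 j = 0) :
    A.det = ∑ j ∈ s, (-1) ^ (j : ℕ) * A 0 j * (A.submatrix Fin.succ j.succAbove).det := by
  rw [det_succ_row_zero]
  exact (Finset.sum_subset s.subset_univ fun j _ hj => by simp [hs j hj]).symm

theorem det_succ_column_zero_of_support {n : ℕ} (A : Matrix (Fin (n + 1)) (Fin (n + 1)) R)
    (s : Finset (Fin (n + 1))) (hs : ∀ i ∉ s, A i 0 = 0) :
    A.det = ∑ i ∈ s, (-1) ^ (i : ℕ) * A i 0 * (A.submatrix i.succAbove Fin.succ).det := by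
  rw [det_succ_column_zero]
  exact (Finset.sum_subset s.subset_univ fun i _ hi => by simp [hs i hi]).symm

/-- The Fibonacci polynomial `f_{m+1}` evaluated at `x`; the index shift makes
`(tridiag x m).det = fibPoly x m`. -/
def fibPoly (x : R) : ℕ → R
  | 0 => 1
  | 1 => x
  | k + 2 => x * fibPoly x (k + 1) + fibPoly x k

theorem fibPoly_eq_of_recurrence (x : R) {f : ℕ → R} (hf1 : f 1 = 1) (hf2 : f 2 = x)
    (hf : ∀ k, 2 ≤ k → f (k + 1) = x * f k + f (k - 1)) (m : ℕ) :
    fibPoly x m = f (m + 1) := by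
  induction m using Nat.strong_induction_on with
  | _ m ih =>
    match m with
    | 0 => exact hf1.symm
    | 1 => exact hf2.symm
    | k + 2 =>
      rw [fibPoly, ih (k + 1) (by omega), ih k (by omega), hf (k + 2) le_add_self]
      rfl

def tridiag (x : R) (m : ℕ) : Matrix (Fin m) (Fin m) R :=
  of fun i j => if (i : ℕ) = j then x else if (j : ℕ) = i + 1 then -1
    else if (i : ℕ) = j + 1 then 1 else 0

def wheel (x : R) (n : ℕ) : Matrix (Fin n) (Fin n) R :=
  of fun i j => if (i : ℕ) = j then (if (i : ℕ) = 0 then x - 1 else x)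
    else if (j : ℕ) = i + 1 then -1
    else if (i : ℕ) = j + 1 then 1
    else if (i : ℕ) = 0 ∧ (j : ℕ) = n - 1 then 1
    else if (i : ℕ) = n - 1 ∧ (j : ℕ) = 0 then -1
    else 0

@[grind =]
theorem tridiag_apply (x : R) (m : ℕ) (i j : Fin m) : tridiag x m i j =
    if (i : ℕ) = j then x else if (j : ℕ) = i + 1 then -1
      else if (i : ℕ) = j + 1 then 1 else 0 := rfl

@[grind =]
theorem wheel_apply (x : R) (n : ℕ) (i j : Fin n) : wheel x n i j =
    if (i : ℕ) = j then (if (i : ℕ) = 0 then x - 1 else x)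
      else if (j : ℕ) = i + 1 then -1
      else if (i : ℕ) = j + 1 then 1
      else if (i : ℕ) = 0 ∧ (j : ℕ) = n - 1 then 1
      else if (i : ℕ) = n - 1 ∧ (j : ℕ) = 0 then -1
      else 0 := rfl

attribute [local grind =] submatrix_apply Fin.val_one Fin.val_last

theorem det_tridiag (x : R) : ∀ m, (tridiag x m).det = fibPoly x m
  | 0 => by simp [fibPoly]
  | 1 => by simp [tridiag, fibPoly]
  | k + 2 => by
    set A := tridiag x (k + 2)
    have hrow : ∀ j ∉ ({0, 1} : Finset (Fin (k + 2))), A 0 j = 0 := by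
      intro j hj
      simp only [Finset.mem_insert, Finset.mem_singleton, Fin.ext_iff] at hj
      grind
    have hcol : ∀ i ∉ ({0} : Finset (Fin (k + 1))),
        A.submatrix Fin.succ (Fin.succAbove 1) i 0 = 0 := by
      intro i hi
      simp only [Finset.mem_singleton, Fin.ext_iff] at hi
      grind
    have h00 : A.submatrix Fin.succ Fin.succ = tridiag x (k + 1) := by ext; grind
    have h01 : (A.submatrix Fin.succ (Fin.succAbove 1)).submatrix Fin.succ Fin.succ =
        tridiag x k := by ext; grind
    have hA : A 0 0 = x ∧ A 0 1 = -1 ∧ A 1 0 = 1 := by grind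
    rw [det_succ_row_zero_of_support A _ hrow, Finset.sum_pair zero_ne_one,
      det_succ_column_zero_of_support _ _ hcol, Finset.sum_singleton]
    simp only [Fin.succAbove_zero]
    rw [h00, h01, det_tridiag x (k + 1), det_tridiag x k]
    simp [hA, fibPoly]

theorem wheel_submatrix_zero (x : R) (k : ℕ) :
    (wheel x (k + 3)).submatrix Fin.succ Fin.succ = tridiag x (k + 2) := by
  ext; grind

theorem det_wheel_submatrix_one (x : R) (k : ℕ) :
    ((wheel x (k + 3)).submatrix Fin.succ (Fin.succAbove 1)).det = fibPoly x (k + 1) - 1 := by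
  set Q := (wheel x (k + 3)).submatrix Fin.succ (Fin.succAbove 1)
  have hcol : ∀ i ∉ ({0, Fin.last _} : Finset (Fin (k + 2))), Q i 0 = 0 := by
    intro i hi
    simp only [Finset.mem_insert, Finset.mem_singleton, Fin.ext_iff] at hi
    grind
  have h0 : Q.submatrix Fin.succ Fin.succ = tridiag x (k + 1) := by ext; grind
  have hlow : (Q.submatrix (Fin.last _).succAbove Fin.succ).IsLowerTriangular := by
    intro i j hij
    simp only [OrderDual.toDual_lt_toDual, Fin.lt_def] at hij
    grind
  have hdiag : ∀ i, Q.submatrix (Fin.last _).succAbove Fin.succ i i = -1 := by grind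
  have hQ : Q 0 0 = 1 ∧ Q (Fin.last _) 0 = -1 := by simp [Q, wheel_apply]
  rw [det_succ_column_zero_of_support Q _ hcol, Finset.sum_pair (Fin.last_pos.ne),
    Fin.succAbove_zero, h0, det_tridiag, det_of_isLowerTriangular _ hlow,
    Finset.prod_congr rfl fun i _ => hdiag i]
  simp [hQ, ← pow_add, ← two_mul, sub_eq_add_neg]

theorem det_wheel_submatrix_last (x : R) (k : ℕ) :
    ((wheel x (k + 3)).submatrix Fin.succ (Fin.last _).succAbove).det =
      1 + (-1) ^ k * fibPoly x (k + 1) := by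
  set Q := (wheel x (k + 3)).submatrix Fin.succ (Fin.last _).succAbove
  have hcol : ∀ i ∉ ({0, Fin.last _} : Finset (Fin (k + 2))), Q i 0 = 0 := by
    intro i hi
    simp only [Finset.mem_insert, Finset.mem_singleton, Fin.ext_iff] at hi
    grind
  have hup : (Q.submatrix Fin.succ Fin.succ).IsUpperTriangular := by
    intro i j hij
    simp only [id, Fin.lt_def] at hij
    grind
  have hdiag : ∀ i, Q.submatrix Fin.succ Fin.succ i i = 1 := by grind
  have hlast : Q.submatrix (Fin.last _).succAbove Fin.succ = tridiag x (k + 1) := by ext; grind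
  have hQ : Q 0 0 = 1 ∧ Q (Fin.last _) 0 = -1 := by simp [Q, wheel_apply]
  rw [det_succ_column_zero_of_support Q _ hcol, Finset.sum_pair (Fin.last_pos.ne),
    Fin.succAbove_zero, det_of_isUpperTriangular hup,
    Finset.prod_congr rfl fun i _ => hdiag i, hlast, det_tridiag]
  simp [hQ, pow_succ]

theorem det_wheel (x : R) (k : ℕ) :
    (wheel x (k + 3)).det =
      (x - 1) * fibPoly x (k + 2) + 2 * fibPoly x (k + 1) + (-1) ^ k - 1 := by
  set W := wheel x (k + 3)
  have hrow : ∀ j ∉ ({0, 1, Fin.last _} : Finset (Fin (k + 3))), W 0 j = 0 := by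
    intro j hj
    simp only [Finset.mem_insert, Finset.mem_singleton, Fin.ext_iff] at hj
    grind
  have hW : W 0 0 = x - 1 ∧ W 0 1 = -1 ∧ W 0 (Fin.last _) = 1 := by simp [W, wheel_apply]
  rw [det_succ_row_zero_of_support W _ hrow, Finset.sum_insert (by simp [Fin.ext_iff]),
    Finset.sum_pair (by simp [Fin.ext_iff]), Fin.succAbove_zero, wheel_submatrix_zero,
    det_tridiag, det_wheel_submatrix_one, det_wheel_submatrix_last]
  simp only [hW, Fin.val_zero, Fin.val_one, Fin.val_last, pow_zero, pow_succ, one_mul]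
  linear_combination fibPoly x (k + 1) * (Even.neg_one_pow ⟨k, rfl⟩ : (-1 : R) ^ (k + k) = 1)

theorem charmatrix_eq_wheel (n : ℕ) :
    charmatrix (of fun i j : Fin n =>
      if i = j then (if i.val = 0 then (1 : R) else 0)
      else if j.val = i.val + 1 then 1
      else if i.val = j.val + 1 then -1
      else if i.val = 0 ∧ j.val = n - 1 then -1
      else if i.val = n - 1 ∧ j.val = 0 then 1
      else 0) = wheel Polynomial.X n := by
  ext i j : 1
  by_cases h : i = j
  · subst h
    rw [charmatrix_apply_eq, wheel_apply, of_apply, if_pos rfl, if_pos rfl]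
    split_ifs <;> simp
  · rw [charmatrix_apply_ne _ _ _ h, wheel_apply, of_apply, if_neg h,
      if_neg (Fin.val_ne_of_ne h)]
    split_ifs <;> simp

end WheelCharpoly

open WheelCharpoly in
theorem charpoly_wheel_twisted (n : ℕ) (hn : 3 ≤ n)
    (f : ℕ → Polynomial ℝ)
    (hf1 : f 1 = 1) (hf2 : f 2 = Polynomial.X)
    (hf : ∀ k, 2 ≤ k → f (k + 1) = Polynomial.X * f k + f (k - 1)) :
    (Matrix.of (fun i j : Fin n =>
      if i = j then (if i.val = 0 then (1 : ℝ) else 0)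
      else if j.val = i.val + 1 then 1
      else if i.val = j.val + 1 then -1
      else if i.val = 0 ∧ j.val = n - 1 then -1
      else if i.val = n - 1 ∧ j.val = 0 then 1
      else 0) : Matrix (Fin n) (Fin n) ℝ).charpoly
      = (Polynomial.X - 1) * f n + 2 * f (n - 1) + (-1) ^ (n + 1) - 1 := by
  obtain ⟨k, rfl⟩ : ∃ k, n = k + 3 := ⟨n - 3, by omega⟩
  have hfib := fibPoly_eq_of_recurrence Polynomial.X hf1 hf2 hf
  rw [Matrix.charpoly, charmatrix_eq_wheel, det_wheel, hfib, hfib]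
  simp [pow_succ]
end

section
/- Let T_n (n ≥ 3) be the caterpillar tree on n vertices obtained from a path v_2 v_3 ⋯ v_n by attaching a pendant vertex v_1 to v_3. Then the number of perfect matchings of the Cartesian product P_2 × T_n equals the (n−1)-th Lucas number ℓ_{n−1}, where ℓ_1 = 1, ℓ_2 = 3. -/
/-!
In a perfect matching of `P₂ □ G`, the edges inside the two copies of `G` form two matchings of
`G` covering the same vertices, namely those `v` whose rung `(0, v)(1, v)` is not used. Their
symmetric difference is therefore a disjoint union of cycles, so when `G` is a forest the two
matchings coincide, and the perfect matchings of `P₂ □ G` correspond to the matchings of `G`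
(the uncovered vertices taking their rungs).

Rooted at its last vertex, `T_n` has the edges `{i, parent i}`, so a matching of `T_n` is encoded
by the set of lower endpoints of its edges. Whether the top edge is used gives
`c n = c (n - 1) + c (n - 2)` for the number `c n` of matchings, with `c 3 = 3` and `c 4 = 4`:
these are the Lucas numbers.
-/

open scoped symmDiff

namespace SimpleGraph

variable {V : Type*} {G : SimpleGraph V}

theorem IsAcyclic.eq_bot_of_isCycles [Finite V] (hG : G.IsAcyclic) (hc : G.IsCycles) :
    G = ⊥ := by
  ext u v
  refine ⟨fun h => ?_, fun h => h.elim⟩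
  exact isAcyclic_iff_forall_adj_isBridge.mp hG h (hc.reachable_deleteEdges h)

theorem isAcyclic_of_subsingleton_upper_neighbors [LinearOrder V]
    (h : ∀ v, {w | G.Adj v w ∧ v < w}.Subsingleton) : G.IsAcyclic := by
  intro v c hc
  obtain ⟨u, hu, hmin⟩ := c.support.toFinset.exists_min_image id ⟨v, by simp⟩
  rw [List.mem_toFinset] at hu
  set c' := c.rotate u hu
  have hc' : c'.IsCycle := hc.rotate hu
  have above : ∀ w ∈ c'.support, G.Adj u w → u < w := fun w hw hadj =>
    lt_of_le_of_ne (hmin w (by simpa [c'] using hw)) hadj.ne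
  have h1 := above _ (c'.getVert_mem_support 1) (c'.adj_snd hc'.not_nil)
  have h2 := above _ (c'.getVert_mem_support _) (c'.adj_penultimate hc'.not_nil).symm
  exact hc'.snd_ne_penultimate (h u ⟨c'.adj_snd hc'.not_nil, h1⟩
    ⟨(c'.adj_penultimate hc'.not_nil).symm, h2⟩)

theorem isCycles_symmDiff_of_subsingleton {L₀ L₁ : SimpleGraph V}
    (h₀ : ∀ v, (L₀.neighborSet v).Subsingleton) (h₁ : ∀ v, (L₁.neighborSet v).Subsingleton)
    (hcover : ∀ v, (L₀.neighborSet v).Nonempty ↔ (L₁.neighborSet v).Nonempty) :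
    (L₀ ∆ L₁).IsCycles := by
  rintro v ⟨w, hw⟩
  have hN : (L₀ ∆ L₁).neighborSet v = L₀.neighborSet v ∆ L₁.neighborSet v := by
    ext; simp [symmDiff_def]
  rw [hN] at hw ⊢
  have hcov : (L₀.neighborSet v).Nonempty ∧ (L₁.neighborSet v).Nonempty := by
    rcases hw with ⟨hw, -⟩ | ⟨hw, -⟩
    · exact ⟨⟨w, hw⟩, (hcover v).mp ⟨w, hw⟩⟩
    · exact ⟨(hcover v).mpr ⟨w, hw⟩, ⟨w, hw⟩⟩
  obtain ⟨⟨w₀, hw₀⟩, ⟨w₁, hw₁⟩⟩ := hcov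
  rw [(h₀ v).eq_singleton_of_mem hw₀, (h₁ v).eq_singleton_of_mem hw₁] at hw ⊢
  have hne : w₀ ≠ w₁ := by
    rintro rfl
    simp at hw
  rw [(Set.disjoint_singleton.mpr hne).symmDiff_eq_sup]
  exact Set.ncard_pair hne

lemma pathGraph_two_adj {a b : Fin 2} : (pathGraph 2).Adj a b ↔ a ≠ b := by
  rw [pathGraph_two_eq_top, top_adj]

def matchings (G : SimpleGraph V) : Set (SimpleGraph V) :=
  {L | L ≤ G ∧ ∀ v, (L.neighborSet v).Subsingleton}

namespace Subgraph

variable (M : (pathGraph 2 □ G).Subgraph)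

def layer (a : Fin 2) : SimpleGraph V := M.spanningCoe.comap (Prod.mk a)

@[simp] lemma layer_adj {a : Fin 2} {u v : V} : (M.layer a).Adj u v ↔ M.Adj (a, u) (a, v) :=
  Iff.rfl

lemma layer_le (a : Fin 2) : M.layer a ≤ G := fun _ _ h => boxProd_adj_right.mp (M.adj_sub h)

lemma adj_rung_iff {a b : Fin 2} (hab : a ≠ b) {v : V} :
    M.Adj (a, v) (b, v) ↔ M.Adj (0, v) (1, v) := by
  fin_cases a <;> fin_cases b <;> simp_all [M.adj_comm]

variable {M}

lemma IsPerfectMatching.layer_neighborSet_subsingleton (hM : M.IsPerfectMatching) (a : Fin 2)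
    (v : V) : ((M.layer a).neighborSet v).Subsingleton := fun _ hw _ hw' =>
  congrArg Prod.snd ((hM.1 (hM.2 (a, v))).unique hw hw')

lemma IsPerfectMatching.layer_neighborSet_nonempty_iff (hM : M.IsPerfectMatching) (a : Fin 2)
    (v : V) : ((M.layer a).neighborSet v).Nonempty ↔ ¬M.Adj (0, v) (1, v) := by
  constructor
  · rintro ⟨w, hw⟩ hrung
    rw [← M.adj_rung_iff (a := a) (b := a + 1) (by fin_cases a <;> decide)] at hrung
    have := congrArg Prod.fst ((hM.1 (hM.2 (a, v))).unique hrung hw)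
    fin_cases a <;> simp at this
  · intro hrung
    obtain ⟨⟨b, w⟩, hw⟩ := (hM.1 (hM.2 (a, v))).exists
    rcases boxProd_adj.mp (M.adj_sub hw) with ⟨hab, rfl⟩ | ⟨-, rfl⟩
    · exact (hrung ((M.adj_rung_iff (pathGraph_two_adj.mp hab)).mp hw)).elim
    · exact ⟨w, hw⟩

theorem IsPerfectMatching.layer_eq_layer_zero [Finite V] (hG : G.IsAcyclic)
    (hM : M.IsPerfectMatching) (a : Fin 2) : M.layer a = M.layer 0 := by
  have hcyc := isCycles_symmDiff_of_subsingleton (hM.layer_neighborSet_subsingleton 1)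
    (hM.layer_neighborSet_subsingleton 0)
    (fun v => by rw [hM.layer_neighborSet_nonempty_iff, hM.layer_neighborSet_nonempty_iff])
  have hacyc := hG.anti (symmDiff_le_sup.trans (sup_le (M.layer_le 1) (M.layer_le 0)))
  fin_cases a
  · rfl
  · exact symmDiff_eq_bot.mp (hacyc.eq_bot_of_isCycles hcyc)

def prismMatching (L : SimpleGraph V) (hL : L ≤ G) : (pathGraph 2 □ G).Subgraph where
  verts := Set.univ
  Adj x y := x.1 = y.1 ∧ L.Adj x.2 y.2 ∨ x.1 ≠ y.1 ∧ x.2 = y.2 ∧ ∀ w, ¬L.Adj x.2 w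
  adj_sub := by
    rintro ⟨a, u⟩ ⟨b, v⟩ (⟨rfl, h⟩ | ⟨hab, rfl, -⟩)
    · exact boxProd_adj_right.mpr (hL h)
    · exact boxProd_adj_left.mpr (pathGraph_two_adj.mpr hab)
  edge_vert _ := Set.mem_univ _
  symm := ⟨by
    rintro ⟨a, u⟩ ⟨b, v⟩ (⟨rfl, h⟩ | ⟨hab, rfl, h⟩)
    · exact Or.inl ⟨rfl, h.symm⟩
    · exact Or.inr ⟨hab.symm, rfl, h⟩⟩

lemma isPerfectMatching_prismMatching {L : SimpleGraph V} (hL : L ≤ G)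
    (hsub : ∀ v, (L.neighborSet v).Subsingleton) : (prismMatching L hL).IsPerfectMatching := by
  refine ⟨fun ⟨a, v⟩ _ => ?_, fun _ => Set.mem_univ _⟩
  by_cases hv : ∃ w, L.Adj v w
  · obtain ⟨w, hw⟩ := hv
    refine ⟨(a, w), Or.inl ⟨rfl, hw⟩, ?_⟩
    rintro ⟨b, w'⟩ (⟨rfl, h⟩ | ⟨-, -, h⟩)
    · exact congrArg (Prod.mk a) (hsub v h hw)
    · exact (h w hw).elim
  · push Not at hv
    refine ⟨(a + 1, v), Or.inr ⟨by fin_cases a <;> simp, rfl, hv⟩, ?_⟩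
    rintro ⟨b, w⟩ (⟨-, h⟩ | ⟨hab, rfl, -⟩)
    · exact (hv _ h).elim
    · fin_cases a <;> fin_cases b <;> simp_all

@[simp] lemma layer_prismMatching {L : SimpleGraph V} (hL : L ≤ G) (a : Fin 2) :
    (prismMatching L hL).layer a = L := by
  ext u v
  simp [prismMatching]

theorem IsPerfectMatching.prismMatching_layer [Finite V] (hG : G.IsAcyclic)
    (hM : M.IsPerfectMatching) : prismMatching (M.layer 0) (M.layer_le 0) = M := by
  refine Subgraph.ext (Subgraph.isSpanning_iff.mp hM.2).symm ?_
  ext ⟨a, u⟩ ⟨b, v⟩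
  simp only [prismMatching]
  rcases eq_or_ne a b with rfl | hab
  · simp [← hM.layer_eq_layer_zero hG a]
  · have hno : (∀ w, ¬(M.layer 0).Adj u w) ↔ M.Adj (0, u) (1, u) := by
      simpa [Set.Nonempty] using (hM.layer_neighborSet_nonempty_iff 0 u).not
    simp only [hab, ne_eq, false_and, not_false_eq_true, true_and, false_or, hno]
    constructor
    · rintro ⟨rfl, h⟩
      exact (M.adj_rung_iff hab).mpr h
    · intro h
      rcases boxProd_adj.mp (M.adj_sub h) with ⟨-, rfl⟩ | ⟨-, hab'⟩
      · exact ⟨rfl, (M.adj_rung_iff hab).mp h⟩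
      · exact (hab hab').elim

end Subgraph

def prismPerfectMatchingEquiv [Finite V] (hG : G.IsAcyclic) :
    {M : (pathGraph 2 □ G).Subgraph // M.IsPerfectMatching} ≃ G.matchings where
  toFun M := ⟨M.1.layer 0, M.1.layer_le 0, M.2.layer_neighborSet_subsingleton 0⟩
  invFun L :=
    ⟨Subgraph.prismMatching L.1 L.2.1, Subgraph.isPerfectMatching_prismMatching L.2.1 L.2.2⟩
  left_inv M := Subtype.ext (M.2.prismMatching_layer hG)
  right_inv L := Subtype.ext (Subgraph.layer_prismMatching L.2.1 0)

theorem ncard_prism_perfectMatchings [Finite V] (hG : G.IsAcyclic) :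
    {M : (pathGraph 2 □ G).Subgraph | M.IsPerfectMatching}.ncard = G.matchings.ncard := by
  rw [← Nat.card_coe_set_eq, ← Nat.card_coe_set_eq]
  exact Nat.card_congr (prismPerfectMatchingEquiv hG)

end SimpleGraph

open Finset SimpleGraph

-- The paper's vertex `v_k` is `k - 1 : Fin n`.
def caterpillar (n : ℕ) : SimpleGraph (Fin n) := SimpleGraph.fromRel
  (fun i j => (1 ≤ i.val ∧ j.val = i.val + 1) ∨ (i.val = 0 ∧ j.val = 2))

namespace Caterpillar

def parent (i : ℕ) : ℕ := if i = 0 then 2 else i + 1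

lemma lt_parent (i : ℕ) : i < parent i := by
  unfold parent; split_ifs <;> omega

lemma parent_eq_iff {i m : ℕ} (hm : 3 ≤ m) : parent i = m ↔ i = m - 1 := by
  unfold parent; split_ifs <;> omega

-- The sets of lower endpoints of the matchings of `caterpillar n`.
def codes (n : ℕ) : Finset (Finset ℕ) := (range n).powerset.filter fun A =>
  ∀ i ∈ A, parent i < n ∧ ∀ j ∈ A, parent i ≠ j ∧ (parent i = parent j → i = j)

lemma mem_codes {n : ℕ} {A : Finset ℕ} : A ∈ codes n ↔
    ∀ i ∈ A, parent i < n ∧ ∀ j ∈ A, parent i ≠ j ∧ (parent i = parent j → i = j) := by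
  simp only [codes, mem_filter, mem_powerset, and_iff_right_iff_imp]
  exact fun h i hi => mem_range.mpr ((lt_parent i).trans (h i hi).1)

lemma add_two_le_of_mem_codes {n i : ℕ} {A : Finset ℕ} (hA : A ∈ codes n) (hi : i ∈ A) :
    i + 2 ≤ n := by
  have := lt_parent i
  have := (mem_codes.mp hA i hi).1
  omega

lemma codes_add_two {k : ℕ} (hk : 2 ≤ k) :
    codes (k + 2) = codes (k + 1) ∪ (codes k).image (insert k) := by
  have hpk : parent k = k + 1 := (parent_eq_iff (by omega)).mpr rfl
  ext A
  simp only [mem_union, mem_image, mem_codes]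
  constructor
  · intro hA
    by_cases hkA : k ∈ A
    · refine Or.inr ⟨A.erase k, fun i hi => ?_, insert_erase hkA⟩
      obtain ⟨hik, hiA⟩ := mem_erase.mp hi
      obtain ⟨hlt, hpair⟩ := hA i hiA
      have hne : parent i ≠ k + 1 := fun h => hik ((hpair k hkA).2 (h.trans hpk.symm))
      have := (hpair k hkA).1
      exact ⟨by omega, fun j hj => hpair j (mem_of_mem_erase hj)⟩
    · refine Or.inl fun i hi => ?_
      obtain ⟨hlt, hpair⟩ := hA i hi
      have hne : parent i ≠ k + 1 := fun h => by
        rw [(parent_eq_iff (by omega)).mp h, Nat.add_sub_cancel] at hi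
        exact hkA hi
      exact ⟨by omega, hpair⟩
  · rintro (hA | ⟨B, hB, rfl⟩)
    · exact fun i hi => ⟨by have := (hA i hi).1; omega, (hA i hi).2⟩
    · have hBk : ∀ j ∈ B, j < parent j ∧ parent j < k := fun j hj => ⟨lt_parent j, (hB j hj).1⟩
      intro i hi
      rcases mem_insert.mp hi with rfl | hi
      · refine ⟨by omega, fun j hj => ?_⟩
        rcases mem_insert.mp hj with rfl | hj
        · exact ⟨by omega, fun _ => rfl⟩
        · have := hBk j hj
          exact ⟨by omega, fun h => by omega⟩
      · have := hBk i hi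
        refine ⟨by omega, fun j hj => ?_⟩
        rcases mem_insert.mp hj with rfl | hj
        · exact ⟨by omega, fun h => by omega⟩
        · exact (hB i hi).2 j hj

lemma card_codes_add_two {k : ℕ} (hk : 2 ≤ k) :
    (codes (k + 2)).card = (codes (k + 1)).card + (codes k).card := by
  have hk_notMem : ∀ {m A}, A ∈ codes m → m ≤ k + 1 → k ∉ A := fun hA hm hkA => by
    have := add_two_le_of_mem_codes hA hkA
    omega
  rw [codes_add_two hk, card_union_of_disjoint, card_image_of_injOn]
  · intro B hB C hC h
    rw [← erase_insert (hk_notMem hB (by omega)), ← erase_insert (hk_notMem hC (by omega))]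
    exact congrArg (erase · k) h
  · rw [Finset.disjoint_left]
    rintro A hA hA'
    obtain ⟨B, -, rfl⟩ := mem_image.mp hA'
    exact hk_notMem hA le_rfl (mem_insert_self k B)

theorem card_codes (l : ℕ → ℕ) (hl1 : l 1 = 1) (hl2 : l 2 = 3)
    (hl : ∀ k, 3 ≤ k → l k = l (k - 1) + l (k - 2)) {n : ℕ} (hn : 3 ≤ n) :
    (codes n).card = l (n - 1) := by
  induction n using Nat.strong_induction_on with
  | _ n ih =>
    rcases (show n = 3 ∨ n = 4 ∨ 5 ≤ n by omega) with rfl | rfl | hn5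
    · rw [hl2]; decide
    · rw [hl 3 le_rfl, hl2, hl1]; decide
    · obtain ⟨k, rfl⟩ : ∃ k, n = k + 2 := ⟨n - 2, by omega⟩
      rw [card_codes_add_two (by omega), ih (k + 1) (by omega) (by omega),
        ih k (by omega) (by omega), hl (k + 2 - 1) (by omega)]
      rfl

end Caterpillar

open Caterpillar

lemma caterpillar_adj {n : ℕ} {u v : Fin n} :
    (caterpillar n).Adj u v ↔ v.val = parent u ∨ u.val = parent v := by
  have hrel : ∀ i j : Fin n,
      (1 ≤ i.val ∧ j.val = i.val + 1 ∨ i.val = 0 ∧ j.val = 2) ↔ j.val = parent i := by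
    intro i j; unfold parent; split_ifs <;> omega
  rw [caterpillar, fromRel_adj, hrel, hrel]
  refine ⟨And.right, fun h => ⟨?_, h⟩⟩
  rintro rfl
  have := lt_parent u
  omega

lemma isAcyclic_caterpillar (n : ℕ) : (caterpillar n).IsAcyclic := by
  have hup : ∀ {v w : Fin n}, (caterpillar n).Adj v w ∧ v < w → w.val = parent v := by
    rintro v w ⟨h, hlt⟩
    rcases caterpillar_adj.mp h with h | h
    · exact h
    · have := lt_parent w; rw [Fin.lt_def] at hlt; omega
  exact isAcyclic_of_subsingleton_upper_neighbors fun v w hw w' hw' =>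
    Fin.ext ((hup hw).trans (hup hw').symm)

namespace Caterpillar

variable {n : ℕ}

open Classical in
noncomputable def lowerEnds (L : SimpleGraph (Fin n)) : Finset ℕ :=
  (range n).filter fun i => ∃ u v : Fin n, u.val = i ∧ v.val = parent i ∧ L.Adj u v

lemma mem_lowerEnds {L : SimpleGraph (Fin n)} {i : ℕ} :
    i ∈ lowerEnds L ↔ ∃ u v : Fin n, u.val = i ∧ v.val = parent i ∧ L.Adj u v := by
  simp only [lowerEnds, mem_filter, mem_range, and_iff_right_iff_imp]
  rintro ⟨u, -, rfl, -, -⟩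
  exact u.isLt

def ofLowerEnds (A : Finset ℕ) : SimpleGraph (Fin n) :=
  fromRel fun u v => u.val ∈ A ∧ v.val = parent u

lemma ofLowerEnds_adj {A : Finset ℕ} {u v : Fin n} :
    (ofLowerEnds A).Adj u v ↔ u.val ∈ A ∧ v.val = parent u ∨ v.val ∈ A ∧ u.val = parent v := by
  rw [ofLowerEnds, fromRel_adj, and_iff_right_iff_imp]
  rintro (⟨-, h⟩ | ⟨-, h⟩) rfl <;> exact (lt_parent u).ne h

lemma lowerEnds_mem_codes {L : SimpleGraph (Fin n)} (hL : L ∈ (caterpillar n).matchings) :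
    lowerEnds L ∈ codes n := by
  rw [mem_codes]
  intro i hi
  obtain ⟨u, p, rfl, hp, hup⟩ := mem_lowerEnds.mp hi
  refine ⟨hp ▸ p.isLt, fun j hj => ?_⟩
  obtain ⟨w, q, rfl, hq, hwq⟩ := mem_lowerEnds.mp hj
  constructor
  · intro hpw
    obtain rfl : p = w := Fin.ext (hp.trans hpw)
    obtain rfl : u = q := hL.2 p hup.symm hwq
    have := lt_parent p.val
    have := lt_parent u.val
    omega
  · intro hpq
    obtain rfl : p = q := Fin.ext (hp.trans (hpq.trans hq.symm))
    exact congrArg Fin.val (hL.2 p hup.symm hwq.symm)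

lemma ofLowerEnds_mem_matchings {A : Finset ℕ} (hA : A ∈ codes n) :
    ofLowerEnds A ∈ (caterpillar n).matchings := by
  refine ⟨fun u v h => caterpillar_adj.mpr ?_, fun u w hw w' hw' => ?_⟩
  · rcases ofLowerEnds_adj.mp h with h | h
    · exact Or.inl h.2
    · exact Or.inr h.2
  · rw [mem_codes] at hA
    rw [mem_neighborSet, ofLowerEnds_adj] at hw hw'
    rcases hw with ⟨hu, hw⟩ | ⟨hw, hu⟩ <;> rcases hw' with ⟨hu', hw'⟩ | ⟨hw', hu'⟩
    · exact Fin.ext (hw.trans hw'.symm)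
    · exact ((hA _ hw').2 _ hu).1 hu'.symm |>.elim
    · exact ((hA _ hw).2 _ hu').1 hu.symm |>.elim
    · exact Fin.ext (((hA _ hw).2 _ hw').2 (hu.symm.trans hu'))

lemma ofLowerEnds_lowerEnds {L : SimpleGraph (Fin n)} (hL : L ≤ caterpillar n) :
    ofLowerEnds (lowerEnds L) = L := by
  ext u v
  rw [ofLowerEnds_adj, mem_lowerEnds, mem_lowerEnds]
  constructor
  · rintro (⟨⟨u', v', hu, hv, h⟩, hv'⟩ | ⟨⟨v', u', hv, hu, h⟩, hu'⟩)
    · rwa [Fin.ext hu, Fin.ext (hv.trans hv'.symm)] at h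
    · rw [Fin.ext hv, Fin.ext (hu.trans hu'.symm)] at h
      exact h.symm
  · intro h
    rcases caterpillar_adj.mp (hL h) with hv | hu
    · exact Or.inl ⟨⟨u, v, rfl, hv, h⟩, hv⟩
    · exact Or.inr ⟨⟨v, u, rfl, hu, h.symm⟩, hu⟩

lemma lowerEnds_ofLowerEnds {A : Finset ℕ} (hA : A ∈ codes n) :
    lowerEnds (ofLowerEnds A : SimpleGraph (Fin n)) = A := by
  ext i
  rw [mem_lowerEnds]
  constructor
  · rintro ⟨u, v, rfl, hv, h⟩
    rcases ofLowerEnds_adj.mp h with ⟨hu, -⟩ | ⟨-, hu⟩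
    · exact hu
    · have := lt_parent u.val
      have := lt_parent v.val
      omega
  · intro hi
    have hlt := (mem_codes.mp hA i hi).1
    have := lt_parent i
    exact ⟨⟨i, by omega⟩, ⟨parent i, hlt⟩, rfl, rfl, ofLowerEnds_adj.mpr (Or.inl ⟨hi, rfl⟩)⟩

noncomputable def matchingsEquivCodes : (caterpillar n).matchings ≃ codes n where
  toFun L := ⟨lowerEnds L.1, lowerEnds_mem_codes L.2⟩
  invFun A := ⟨ofLowerEnds A.1, ofLowerEnds_mem_matchings A.2⟩
  left_inv L := Subtype.ext (ofLowerEnds_lowerEnds L.2.1)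
  right_inv A := Subtype.ext (lowerEnds_ofLowerEnds A.2)

end Caterpillar

theorem ncard_matchings_caterpillar (n : ℕ) :
    (caterpillar n).matchings.ncard = (Caterpillar.codes n).card := by
  rw [← Nat.card_coe_set_eq, Nat.card_congr Caterpillar.matchingsEquivCodes,
    Nat.card_eq_fintype_card, Fintype.card_coe]

theorem perfect_matchings_caterpillar (n : ℕ) (hn : 3 ≤ n)
    (l : ℕ → ℕ) (hl1 : l 1 = 1) (hl2 : l 2 = 3)
    (hl : ∀ k, 3 ≤ k → l k = l (k - 1) + l (k - 2)) :
    let T : SimpleGraph (Fin n) := SimpleGraph.fromRel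
      (fun i j => (1 ≤ i.val ∧ j.val = i.val + 1) ∨ (i.val = 0 ∧ j.val = 2))
    {M : ((SimpleGraph.pathGraph 2).boxProd T).Subgraph |
      M.IsPerfectMatching}.ncard = l (n - 1) := by
  intro T
  show {M : (pathGraph 2 □ caterpillar n).Subgraph | M.IsPerfectMatching}.ncard = l (n - 1)
  rw [ncard_prism_perfectMatchings (isAcyclic_caterpillar n), ncard_matchings_caterpillar,
    Caterpillar.card_codes l hl1 hl2 hl hn]
end
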